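/- Let 𝒜 ⊂ L(H_A) and ℬ ⊂ L(H_B) be unital separable C*-algebras with 𝒜 ∩ K(H_A) = {0} and ℬ ∩ K(H_B) = {0}, and let τ_A and τ_B be amenable traces on 𝒜 and ℬ respectively. Then there exists a state ψ on L(H_A ⊗ H_B) which is a hypertrace for the C*-algebra generated by {A ⊗ B : A ∈ 𝒜, B ∈ ℬ} on the Hilbert space tensor product H_A ⊗ H_B and satisfies ψ(A ⊗ B) = τ_A(A) τ_B(B) for all A ∈ 𝒜 and B ∈ ℬ. -/

import Mathlib

open Filter Topology
open scoped ComplexOrder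

noncomputable section

variable {H : Type*} [NormedAddCommGroup H] [InnerProductSpace ℂ H] [CompleteSpace H]

/-- `P` is a finite-rank orthogonal projection on the Hilbert space `H`. -/
def IsFinRankProj (P : H →L[ℂ] H) : Prop :=
  IsIdempotentElem P ∧ IsSelfAdjoint P ∧ FiniteDimensional ℂ (LinearMap.range (P : H →ₗ[ℂ] H))

/-- The Hilbert–Schmidt norm of an operator, computed with respect to the Hilbert basis `b`
(for Hilbert–Schmidt operators it is independent of the choice of `b`). -/
def hsNorm {ι : Type*} (b : HilbertBasis ι ℂ H) (T : H →L[ℂ] H) : ℝ :=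
  Real.sqrt (∑' i, ‖T (b i)‖ ^ 2)

/-- The canonical trace of an operator, computed with respect to the Hilbert basis `b`
(for trace-class operators it is independent of the choice of `b`). -/
def trOp {ι : Type*} (b : HilbertBasis ι ℂ H) (T : H →L[ℂ] H) : ℂ :=
  ∑' i, (inner ℂ (b i) (T (b i)) : ℂ)

/-- `{P n}` is a Følner sequence (of non-zero finite-rank orthogonal projections)
for the set of operators `S ⊆ L(H)`. -/
def IsFolnerSeq {ι : Type*} (b : HilbertBasis ι ℂ H) (S : Set (H →L[ℂ] H))
    (P : ℕ → H →L[ℂ] H) : Prop :=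
  (∀ n, IsFinRankProj (P n) ∧ P n ≠ 0) ∧
  ∀ A ∈ S, Tendsto (fun n => hsNorm b (A * P n - P n * A) / hsNorm b (P n)) atTop (𝓝 0)

/-- A proper Følner sequence: an increasing Følner sequence converging strongly to `1`. -/
def IsProperFolnerSeq {ι : Type*} (b : HilbertBasis ι ℂ H) (S : Set (H →L[ℂ] H))
    (P : ℕ → H →L[ℂ] H) : Prop :=
  IsFolnerSeq b S P ∧ Monotone (fun n => LinearMap.range (P n : H →ₗ[ℂ] H)) ∧
    ∀ x : H, Tendsto (fun n => P n x) atTop (𝓝 x)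

/-- A state on a unital complex `*`-algebra: a unital positive linear functional. -/
def IsStateOn {A : Type*} [Ring A] [Algebra ℂ A] [StarRing A] (φ : A →ₗ[ℂ] ℂ) : Prop :=
  φ 1 = 1 ∧ ∀ a, 0 ≤ φ (star a * a)

/-- `ψ` is a hypertrace on `L(H)` for the set `S`: a state on `L(H)` centralized by `S`. -/
def IsHypertrace (ψ : (H →L[ℂ] H) →ₗ[ℂ] ℂ) (S : Set (H →L[ℂ] H)) : Prop :=
  IsStateOn ψ ∧ ∀ X : H →L[ℂ] H, ∀ A ∈ S, ψ (X * A) = ψ (A * X)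

/-- The inclusion of a star subalgebra as a linear map. -/
def valLM (𝒜 : StarSubalgebra ℂ (H →L[ℂ] H)) : ↥𝒜 →ₗ[ℂ] (H →L[ℂ] H) :=
  { toFun := Subtype.val, map_add' := fun _ _ => rfl, map_smul' := fun _ _ => rfl }

/-- `τ` is an amenable trace on the concrete C*-algebra `𝒜 ⊆ L(H)`: a state on `𝒜` which
extends to a state `ψ` on `L(H)` satisfying `ψ(XA) = ψ(AX)` for `X ∈ L(H)`, `A ∈ 𝒜`. -/
def IsAmenableTrace (𝒜 : StarSubalgebra ℂ (H →L[ℂ] H)) (τ : ↥𝒜 →ₗ[ℂ] ℂ) : Prop :=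
  IsStateOn τ ∧ ∃ ψ : (H →L[ℂ] H) →ₗ[ℂ] ℂ,
    IsHypertrace ψ ↑𝒜 ∧ ∀ a : ↥𝒜, ψ (valLM 𝒜 a) = τ a

/-!
Let `ψ_A`, `ψ_B` be hypertraces extending `τ_A`, `τ_B`. The product state is `ψ_A ∘ (id ⊗ ψ_B)`,
where the slice map `id ⊗ ψ_B : L(H_A ⊗ H_B) → L(H_A)` is given by
`⟪x, (id ⊗ ψ_B)(T) x'⟫ = ψ_B (V_x† T V_x')` with `V_x y = x ⊗ y`. The slice map is positive,
unital, and a bimodule map for the operators `A ⊗ 1`, so `A ⊗ 1` centralizes the product state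
whenever `A` centralizes `ψ_A`; and `1 ⊗ B` centralizes it whenever `B` centralizes `ψ_B`,
because `V_x† (1 ⊗ B) = B V_x†` and `(1 ⊗ B) V_x' = V_x' B`. The centralizer of a state is a
norm-closed `*`-subalgebra, so it contains the C*-algebra generated by the products
`A ⊗ B = (A ⊗ 1)(1 ⊗ B)`.
-/

open ContinuousLinearMap InnerProductSpace

section Centralizer

variable {A : Type*} [Ring A] [Algebra ℂ A]

def functionalCentralizer (ψ : A →ₗ[ℂ] ℂ) : Subalgebra ℂ A where
  carrier := {a | ∀ x, ψ (x * a) = ψ (a * x)}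
  mul_mem' {a b} ha hb x := by rw [← mul_assoc, hb, ← mul_assoc, ha, mul_assoc]
  add_mem' ha hb x := by simp only [mul_add, add_mul, map_add, ha x, hb x]
  algebraMap_mem' r x := by rw [Algebra.commutes]

lemma isClosed_functionalCentralizer [TopologicalSpace A] [IsTopologicalRing A]
    {ψ : A →ₗ[ℂ] ℂ} (hψ : Continuous ψ) : IsClosed (functionalCentralizer ψ : Set A) := by
  simp only [functionalCentralizer, Subalgebra.coe_mk, Set.ofPred_forall]
  exact isClosed_iInter fun x =>
    isClosed_eq (hψ.comp (continuous_const_mul x)) (hψ.comp (continuous_mul_const x))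

end Centralizer

namespace IsStateOn

variable {A : Type*} [CStarAlgebra A] [PartialOrder A] [StarOrderedRing A] {φ : A →ₗ[ℂ] ℂ}

lemma map_nonneg (hφ : IsStateOn φ) {a : A} (ha : 0 ≤ a) : 0 ≤ φ a := by
  obtain ⟨b, rfl⟩ := CStarAlgebra.nonneg_iff_eq_star_mul_self.mp ha
  exact hφ.2 b

def toPositiveLinearMap (hφ : IsStateOn φ) : A →ₚ[ℂ] ℂ :=
  .mk₀ φ fun _ => hφ.map_nonneg

@[simp]
lemma toPositiveLinearMap_apply (hφ : IsStateOn φ) (a : A) : hφ.toPositiveLinearMap a = φ a :=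
  rfl

lemma map_star (hφ : IsStateOn φ) (a : A) : φ (star a) = star (φ a) :=
  StarHomClass.map_star hφ.toPositiveLinearMap a

lemma continuous (hφ : IsStateOn φ) : Continuous φ :=
  map_continuous hφ.toPositiveLinearMap

lemma star_mem_functionalCentralizer (hφ : IsStateOn φ) {a : A}
    (ha : a ∈ functionalCentralizer φ) : star a ∈ functionalCentralizer φ := fun x => by
  rw [← star_star x, ← star_mul, ← star_mul, hφ.map_star, hφ.map_star, ha]

lemma isHypertrace_topologicalClosure_adjoin {ψ : (H →L[ℂ] H) →ₗ[ℂ] ℂ}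
    (hψ : IsStateOn ψ) {S : Set (H →L[ℂ] H)} (hS : S ⊆ functionalCentralizer ψ) :
    IsHypertrace ψ ((StarAlgebra.adjoin ℂ S).topologicalClosure : Set (H →L[ℂ] H)) := by
  refine ⟨hψ, fun X a ha => ?_⟩
  have hadjoin : (StarAlgebra.adjoin ℂ S : Set (H →L[ℂ] H)) ⊆ functionalCentralizer ψ := by
    rw [← StarSubalgebra.coe_toSubalgebra, StarAlgebra.adjoin_toSubalgebra]
    refine Algebra.adjoin_le (Set.union_subset hS fun b hb => ?_)
    simpa using hψ.star_mem_functionalCentralizer (hS hb)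
  rw [StarSubalgebra.topologicalClosure_coe] at ha
  exact closure_minimal hadjoin (isClosed_functionalCentralizer hψ.continuous) ha X

end IsStateOn

lemma isPositive_of_forall_inner_nonneg {E : Type*} [NormedAddCommGroup E]
    [InnerProductSpace ℂ E] {T : E →L[ℂ] E} (h : ∀ x, 0 ≤ ⟪x, T x⟫_ℂ) : T.IsPositive := by
  refine (isPositive_iff_complex T).mpr fun x => ?_
  obtain ⟨hre, him⟩ := Complex.nonneg_iff.mp (h x)
  have hsymm : ⟪T x, x⟫_ℂ = ⟪x, T x⟫_ℂ := by
    rw [← inner_conj_symm, Complex.conj_eq_iff_im.mpr him.symm]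
  rw [hsymm]
  exact ⟨Complex.ext (by simp) (by simp [him]), by simpa using hre⟩

lemma norm_apply_apply_of_inner {E F G : Type*} [NormedAddCommGroup E] [InnerProductSpace ℂ E]
    [NormedAddCommGroup F] [InnerProductSpace ℂ F] [NormedAddCommGroup G]
    [InnerProductSpace ℂ G] {t : E →ₗ[ℂ] F →ₗ[ℂ] G}
    (ht : ∀ x x' y y', ⟪t x y, t x' y'⟫_ℂ = ⟪x, x'⟫_ℂ * ⟪y, y'⟫_ℂ) (x : E) (y : F) :
    ‖t x y‖ = ‖x‖ * ‖y‖ := by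
  have h := ht x x y y
  simp only [inner_self_eq_norm_sq_to_K] at h
  rw [← pow_left_inj₀ (norm_nonneg _) (by positivity) two_ne_zero, mul_pow]
  exact_mod_cast h

section Slice

variable {HA HB K : Type*}
  [NormedAddCommGroup HA] [InnerProductSpace ℂ HA]
  [NormedAddCommGroup HB] [InnerProductSpace ℂ HB] [CompleteSpace HB]
  [NormedAddCommGroup K] [InnerProductSpace ℂ K] [CompleteSpace K]
  {V : HA →L[ℂ] HB →L[ℂ] K}
  (hV : ∀ x x' y y', ⟪V x y, V x' y'⟫_ℂ = ⟪x, x'⟫_ℂ * ⟪y, y'⟫_ℂ)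
  (hdense : Dense (Submodule.span ℂ {z | ∃ x y, z = V x y} : Set K))

include hV in
lemma adjoint_apply_tensor (x x' : HA) (y : HB) : adjoint (V x) (V x' y) = ⟪x, x'⟫_ℂ • y :=
  ext_inner_left ℂ fun y' => by rw [adjoint_inner_right, hV, inner_smul_right]

variable [CompleteSpace HA]

include hV hdense in
lemma adjoint_comp_of_apply_tensor {T : K →L[ℂ] K} {A : HA →L[ℂ] HA} {B : HB →L[ℂ] HB}
    (hT : ∀ x y, T (V x y) = V (A x) (B y)) (x : HA) :
    adjoint (V x) ∘L T = B ∘L adjoint (V (adjoint A x)) := by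
  refine ext_on hdense ?_
  rintro _ ⟨x', y, rfl⟩
  simp [hT, adjoint_apply_tensor hV, adjoint_inner_left]

variable (V) in
/-- The slice map `id ⊗ φ : L(HA ⊗ HB) → L(HA)`, where `V x y` plays the role of `x ⊗ y`:
`slice V φ T` is the operator of the bounded sesquilinear form `(x, x') ↦ φ (V x† T V x')`. -/
def slice (φ : (HB →L[ℂ] HB) →ₚ[ℂ] ℂ) : (K →L[ℂ] K) →ₗ[ℂ] (HA →L[ℂ] HA) where
  toFun T := adjoint <| continuousLinearMapOfBilin <|
    (compL ℂ (HB →L[ℂ] K) (HB →L[ℂ] HB) ℂ ⟨φ, map_continuous φ⟩ ∘L compL ℂ HB K HB).bilinearComp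
      ((adjoint : (HB →L[ℂ] K) ≃ₗᵢ⋆[ℂ] (K →L[ℂ] HB)).toContinuousLinearEquiv.toContinuousLinearMap
        |>.comp V)
      (compL ℂ HB K K T ∘L V)
  map_add' T₁ T₂ := by
    ext x' : 1
    refine ext_inner_left ℂ fun x => ?_
    simp [adjoint_inner_right, inner_add_right]
  map_smul' c T := by
    ext x' : 1
    refine ext_inner_left ℂ fun x => ?_
    simp [adjoint_inner_right, inner_smul_right]

section

variable (φ : (HB →L[ℂ] HB) →ₚ[ℂ] ℂ) {ψ : (HA →L[ℂ] HA) →ₗ[ℂ] ℂ}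

lemma inner_slice_apply (T : K →L[ℂ] K) (x x' : HA) :
    ⟪x, slice V φ T x'⟫_ℂ = φ (adjoint (V x) ∘L T ∘L V x') := by
  simp [slice, adjoint_inner_right]; rfl

include hV in
lemma slice_of_apply_tensor {T : K →L[ℂ] K} {A : HA →L[ℂ] HA} {B : HB →L[ℂ] HB}
    (hT : ∀ x y, T (V x y) = V (A x) (B y)) : slice V φ T = φ B • A := by
  ext x' : 1
  refine ext_inner_left ℂ fun x => ?_
  have hsandwich : adjoint (V x) ∘L T ∘L V x' = ⟪x, A x'⟫_ℂ • B := by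
    ext y; simp [hT, adjoint_apply_tensor hV]
  simp [inner_slice_apply, hsandwich, inner_smul_right, mul_comm]

lemma slice_comp_of_apply_tensor_one {T : K →L[ℂ] K} {A : HA →L[ℂ] HA}
    (hT : ∀ x y, T (V x y) = V (A x) y) (X : K →L[ℂ] K) :
    slice V φ (X ∘L T) = slice V φ X ∘L A := by
  ext x' : 1
  refine ext_inner_left ℂ fun x => ?_
  have hright : T ∘L V x' = V (A x') := by ext y; simp [hT]
  simp only [inner_slice_apply, comp_apply, comp_assoc, hright]

include hV hdense in
lemma slice_of_apply_tensor_one_comp {T : K →L[ℂ] K} {A : HA →L[ℂ] HA}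
    (hT : ∀ x y, T (V x y) = V (A x) y) (X : K →L[ℂ] K) :
    slice V φ (T ∘L X) = A ∘L slice V φ X := by
  ext x' : 1
  refine ext_inner_left ℂ fun x => ?_
  have hleft := adjoint_comp_of_apply_tensor hV hdense (B := 1) hT x
  rw [inner_slice_apply, comp_apply, ← adjoint_inner_left, inner_slice_apply, ← comp_assoc,
    ← comp_assoc, hleft, one_def, id_comp, comp_assoc]

include hV hdense in
lemma slice_comp_comm_of_apply_one_tensor {T : K →L[ℂ] K} {B : HB →L[ℂ] HB}
    (hT : ∀ x y, T (V x y) = V x (B y)) (hB : ∀ S, φ (S * B) = φ (B * S)) (X : K →L[ℂ] K) :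
    slice V φ (X ∘L T) = slice V φ (T ∘L X) := by
  ext x' : 1
  refine ext_inner_left ℂ fun x => ?_
  have hright : T ∘L V x' = V x' ∘L B := by ext y; simp [hT]
  have hleft := adjoint_comp_of_apply_tensor hV hdense (A := 1) hT x
  simp only [adjoint_one, one_apply_eq_self] at hleft
  rw [inner_slice_apply, inner_slice_apply]
  calc φ (adjoint (V x) ∘L (X ∘L T) ∘L V x')
      = φ ((adjoint (V x) ∘L X ∘L V x') ∘L B) := by simp only [comp_assoc, hright]
    _ = φ (B ∘L (adjoint (V x) ∘L X ∘L V x')) := hB _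
    _ = φ (adjoint (V x) ∘L (T ∘L X) ∘L V x') := by simp only [← comp_assoc, hleft]

lemma slice_star_mul_self_nonneg (S : K →L[ℂ] K) : 0 ≤ slice V φ (star S * S) := by
  refine (nonneg_iff_isPositive _).mpr <| isPositive_of_forall_inner_nonneg fun x => ?_
  rw [inner_slice_apply]
  refine φ.map_nonneg <| (nonneg_iff_isPositive _).mpr ?_
  simpa [star_eq_adjoint, mul_def, adjoint_comp, comp_assoc] using
    isPositive_adjoint_comp_self (S ∘L V x)

include hV hdense in
lemma mem_functionalCentralizer_comp_slice_of_apply_tensor_one {A : HA →L[ℂ] HA}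
    (hA : A ∈ functionalCentralizer ψ) {T : K →L[ℂ] K} (hT : ∀ x y, T (V x y) = V (A x) y) :
    T ∈ functionalCentralizer (ψ ∘ₗ slice V φ) := fun X => by
  rw [LinearMap.comp_apply, LinearMap.comp_apply, mul_def, mul_def,
    slice_comp_of_apply_tensor_one φ hT, slice_of_apply_tensor_one_comp hV hdense φ hT]
  exact hA _

include hV hdense in
lemma mem_functionalCentralizer_comp_slice_of_apply_one_tensor {B : HB →L[ℂ] HB}
    (hB : ∀ S, φ (S * B) = φ (B * S)) {T : K →L[ℂ] K} (hT : ∀ x y, T (V x y) = V x (B y)) :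
    T ∈ functionalCentralizer (ψ ∘ₗ slice V φ) := fun X => by
  rw [LinearMap.comp_apply, LinearMap.comp_apply, mul_def, mul_def,
    slice_comp_comm_of_apply_one_tensor hV hdense φ hT hB]

end

include hV in
lemma IsStateOn.comp_slice {ψ : (HA →L[ℂ] HA) →ₗ[ℂ] ℂ} (hψ : IsStateOn ψ)
    {φ : (HB →L[ℂ] HB) →ₗ[ℂ] ℂ} (hφ : IsStateOn φ) :
    IsStateOn (ψ ∘ₗ slice V hφ.toPositiveLinearMap) := by
  refine ⟨?_, fun S => hψ.map_nonneg (slice_star_mul_self_nonneg _ S)⟩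
  rw [LinearMap.comp_apply, slice_of_apply_tensor hV _ (A := 1) (B := 1) fun _ _ => rfl]
  simp [hφ.1, hψ.1]

end Slice

theorem tensorProduct_amenableTrace_general
    {HA : Type*} [NormedAddCommGroup HA] [InnerProductSpace ℂ HA] [CompleteSpace HA]
    {HB : Type*} [NormedAddCommGroup HB] [InnerProductSpace ℂ HB] [CompleteSpace HB]
    {K : Type*} [NormedAddCommGroup K] [InnerProductSpace ℂ K] [CompleteSpace K]
    (t : HA →ₗ[ℂ] HB →ₗ[ℂ] K)
    (hinner : ∀ (x x' : HA) (y y' : HB),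
      (inner ℂ (t x y) (t x' y') : ℂ) = (inner ℂ x x' : ℂ) * (inner ℂ y y' : ℂ))
    (hdense : Dense (Submodule.span ℂ {z : K | ∃ x y, z = t x y} : Set K))
    (TP : (HA →L[ℂ] HA) → (HB →L[ℂ] HB) → (K →L[ℂ] K))
    (hTP : ∀ (A : HA →L[ℂ] HA) (B : HB →L[ℂ] HB) (x : HA) (y : HB),
      TP A B (t x y) = t (A x) (B y))
    (𝒜 : StarSubalgebra ℂ (HA →L[ℂ] HA))
    (ℬ : StarSubalgebra ℂ (HB →L[ℂ] HB))
    (τA : ↥𝒜 →ₗ[ℂ] ℂ) (hτA : IsAmenableTrace 𝒜 τA)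
    (τB : ↥ℬ →ₗ[ℂ] ℂ) (hτB : IsAmenableTrace ℬ τB) :
    ∃ ψ : (K →L[ℂ] K) →ₗ[ℂ] ℂ,
      IsHypertrace ψ
        (((StarAlgebra.adjoin ℂ
            {X : K →L[ℂ] K | ∃ A ∈ 𝒜, ∃ B ∈ ℬ, X = TP A B}).topologicalClosure :
          StarSubalgebra ℂ (K →L[ℂ] K)) : Set (K →L[ℂ] K)) ∧
      ∀ (a : ↥𝒜) (b : ↥ℬ), ψ (TP (a : HA →L[ℂ] HA) (b : HB →L[ℂ] HB)) = τA a * τB b := by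
  obtain ⟨-, ψA, ⟨hψA, hψA𝒜⟩, hψAτ⟩ := hτA
  obtain ⟨-, ψB, ⟨hψB, hψBℬ⟩, hψBτ⟩ := hτB
  let V : HA →L[ℂ] HB →L[ℂ] K :=
    t.mkContinuous₂ 1 fun x y => by rw [norm_apply_apply_of_inner hinner, one_mul]
  have hV : ∀ x x' y y', ⟪V x y, V x' y'⟫_ℂ = ⟪x, x'⟫_ℂ * ⟪y, y'⟫_ℂ := hinner
  have hTPV : ∀ A B x y, TP A B (V x y) = V (A x) (B y) := hTP
  have hTP_mul : ∀ A B, TP A B = TP A 1 * TP 1 B := fun A B =>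
    ext_on hdense (by rintro _ ⟨x, y, rfl⟩; simp [hTP])
  refine ⟨ψA ∘ₗ slice V hψB.toPositiveLinearMap,
    (hψA.comp_slice hV hψB).isHypertrace_topologicalClosure_adjoin ?_, fun a b => ?_⟩
  · rintro _ ⟨A, hA, B, hB, rfl⟩
    rw [hTP_mul]
    refine mul_mem ?_ ?_
    · exact mem_functionalCentralizer_comp_slice_of_apply_tensor_one hV hdense _
        (fun X => hψA𝒜 X A hA) fun x y => by simp [hTPV]
    · exact mem_functionalCentralizer_comp_slice_of_apply_one_tensor hV hdense _
        (fun S => hψBℬ S B hB) fun x y => by simp [hTPV]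
  · simp [slice_of_apply_tensor hV _ (hTPV a b), ← hψAτ, ← hψBτ, valLM, mul_comm]

/-- tensor products of amenable traces. Let `𝒜 ⊆ L(H_A)`, `ℬ ⊆ L(H_B)` be
unital separable C*-algebras containing no non-zero compact operators, with amenable
traces `τ_A`, `τ_B`. Realizing the Hilbert space tensor product `H_A ⊗ H_B` as a Hilbert
space `K` (with elementary tensors `t` and tensor product operators `TP` as below), there
exists a state `ψ` on `L(K)` which is a hypertrace for the C*-algebra generated by the
operators `A ⊗ B` (`A ∈ 𝒜`, `B ∈ ℬ`) and satisfies `ψ(A ⊗ B) = τ_A(A)τ_B(B)`. -/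
theorem tensorProduct_amenableTrace
    {HA : Type*} [NormedAddCommGroup HA] [InnerProductSpace ℂ HA] [CompleteSpace HA]
    {HB : Type*} [NormedAddCommGroup HB] [InnerProductSpace ℂ HB] [CompleteSpace HB]
    {K : Type*} [NormedAddCommGroup K] [InnerProductSpace ℂ K] [CompleteSpace K]
    {ιA ιB : Type*} [Countable ιA] [Countable ιB]
    (bA : HilbertBasis ιA ℂ HA) (bB : HilbertBasis ιB ℂ HB)
    (t : HA →ₗ[ℂ] HB →ₗ[ℂ] K)
    (hinner : ∀ (x x' : HA) (y y' : HB),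
      (inner ℂ (t x y) (t x' y') : ℂ) = (inner ℂ x x' : ℂ) * (inner ℂ y y' : ℂ))
    (hdense : Dense (Submodule.span ℂ {z : K | ∃ x y, z = t x y} : Set K))
    (TP : (HA →L[ℂ] HA) → (HB →L[ℂ] HB) → (K →L[ℂ] K))
    (hTP : ∀ (A : HA →L[ℂ] HA) (B : HB →L[ℂ] HB) (x : HA) (y : HB),
      TP A B (t x y) = t (A x) (B y))
    (𝒜 : StarSubalgebra ℂ (HA →L[ℂ] HA)) (hclosedA : IsClosed (𝒜 : Set (HA →L[ℂ] HA)))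
    (hsepA : TopologicalSpace.IsSeparable (𝒜 : Set (HA →L[ℂ] HA)))
    (hcompactA : ∀ T ∈ 𝒜, IsCompactOperator T → T = 0)
    (ℬ : StarSubalgebra ℂ (HB →L[ℂ] HB)) (hclosedB : IsClosed (ℬ : Set (HB →L[ℂ] HB)))
    (hsepB : TopologicalSpace.IsSeparable (ℬ : Set (HB →L[ℂ] HB)))
    (hcompactB : ∀ T ∈ ℬ, IsCompactOperator T → T = 0)
    (τA : ↥𝒜 →ₗ[ℂ] ℂ) (hτA : IsAmenableTrace 𝒜 τA)
    (τB : ↥ℬ →ₗ[ℂ] ℂ) (hτB : IsAmenableTrace ℬ τB) :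
    ∃ ψ : (K →L[ℂ] K) →ₗ[ℂ] ℂ,
      IsHypertrace ψ
        (((StarAlgebra.adjoin ℂ
            {X : K →L[ℂ] K | ∃ A ∈ 𝒜, ∃ B ∈ ℬ, X = TP A B}).topologicalClosure :
          StarSubalgebra ℂ (K →L[ℂ] K)) : Set (K →L[ℂ] K)) ∧
      ∀ (a : ↥𝒜) (b : ↥ℬ), ψ (TP (a : HA →L[ℂ] HA) (b : HB →L[ℂ] HB)) = τA a * τB b :=
  tensorProduct_amenableTrace_general t hinner hdense TP hTP 𝒜 ℬ τA hτA τB hτB
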